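/- (Theorem 1, PSSV proximal operator.) Let B be a real m×m matrix with singular value decomposition B = U D Vᵀ, where U and V are orthogonal and D = diag(σ₁, …, σ_m) with σ₁ ≥ σ₂ ≥ … ≥ σ_m ≥ 0 the singular values of B. Fix an integer 0 ≤ r ≤ m and μ > 0. Write D_r for the diagonal matrix containing the r largest singular values σ₁,…,σ_r (and zeros elsewhere) and D_{r'} for the diagonal matrix containing the remaining singular values σ_{r+1},…,σ_m (and zeros elsewhere), and let 𝒮_τ[x] = sign(x)·max(|x| − τ, 0) be the soft-thresholding operator applied entrywise. Then J* = U (D_r + 𝒮_{1/μ}[D_{r'}]) Vᵀ is a global minimizer of the problem min_J ‖J‖_{>r} + (μ/2)‖J − B‖_F², where ‖J‖_{>r} = Σ_{i=r+1}^{m} σ_i(J) is the sum of all but the r largest singular values of J. -/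

import Mathlib

open Matrix

/-- The singular values of a real `m × m` matrix, in decreasing order:
square roots of the eigenvalues of `AᵀA` (= `AᴴA` over `ℝ`), sorted decreasingly. -/
noncomputable def singularValuesDesc {m : ℕ} (A : Matrix (Fin m) (Fin m) ℝ) :
    Fin m → ℝ :=
  fun i =>
    Real.sqrt
      ((Matrix.isHermitian_conjTranspose_mul_self A).eigenvalues
        (Tuple.sort (Matrix.isHermitian_conjTranspose_mul_self A).eigenvalues i.rev))

/-- The PSSV norm `‖A‖_{>r} = Σ_{i=r+1}^{m} σ_i(A)`: the sum of all but the `r` largest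
singular values of `A`. -/
noncomputable def pssvNorm {m : ℕ} (r : ℕ) (A : Matrix (Fin m) (Fin m) ℝ) : ℝ :=
  ∑ i : Fin m, if r ≤ (i : ℕ) then singularValuesDesc A i else 0

/-- The soft-thresholding (singular value thresholding) operator
`𝒮_τ[x] = sign(x)·max(|x| − τ, 0)`. -/
noncomputable def softThreshold (τ x : ℝ) : ℝ := Real.sign x * max (|x| - τ) 0

/-!
Write `J = P diag(x) Qᵀ` with `x` the singular values of `J`. Von Neumann's trace inequality
`tr(JᵀB) ≤ ∑ xᵢσᵢ` gives `∑ (xᵢ - σᵢ)² ≤ ‖J - B‖_F²`; it follows from Birkhoff's theorem and the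
rearrangement inequality, because the entrywise squares of an orthogonal matrix form a doubly
stochastic matrix. The objective at `J` is therefore at least `∑ᵢ ([r ≤ i] xᵢ + μ/2 (xᵢ - σᵢ)²)`,
which is minimised coordinatewise: by `xᵢ = σᵢ` for `i < r`, and by soft thresholding, the
proximal map of `|·|`, for `i ≥ r`. These minimisers are still sorted, so they are the singular
values of `J*`, and `J*` shares its singular vectors with `B`, so both bounds are attained there.
-/

section OrderedField
variable {R n : Type*} [Field R] [LinearOrder R] [IsStrictOrderedRing R] [Fintype n] [DecidableEq n]

lemma sum_mul_mul_le_of_mem_doublyStochastic {s t : n → R} (hst : Monovary s t)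
    {S : Matrix n n R} (hS : S ∈ doublyStochastic R n) :
    ∑ i, ∑ j, s i * t j * S i j ≤ ∑ i, s i * t i := by
  obtain ⟨w, hw0, hw1, rfl⟩ := exists_eq_sum_perm_of_mem_doublyStochastic hS
  have hperm (e : Equiv.Perm n) :
      ∑ i, ∑ j, s i * t j * e.permMatrix R i j = ∑ i, s i * t (e i) := by
    simp [Equiv.toPEquiv_apply, eq_comm]
  calc ∑ i, ∑ j, s i * t j * (∑ e, w e • e.permMatrix R) i j
      = ∑ e, w e * ∑ i, s i * t (e i) := by
        simp only [Matrix.sum_apply, Matrix.smul_apply, smul_eq_mul, ← hperm, Finset.mul_sum]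
        simp_rw [Finset.sum_comm (γ := Equiv.Perm n), mul_left_comm]
    _ ≤ ∑ e, w e * ∑ i, s i * t i :=
        Finset.sum_le_sum fun e _ =>
          mul_le_mul_of_nonneg_left hst.sum_mul_comp_perm_le_sum_mul (hw0 e)
    _ = ∑ i, s i * t i := by rw [← Finset.sum_mul, hw1, one_mul]

lemma hadamard_self_mem_doublyStochastic {X : Matrix n n R} (hX : Xᵀ * X = 1) :
    X ⊙ X ∈ doublyStochastic R n := by
  have hX' : X * Xᵀ = 1 := mul_eq_one_comm.mp hX
  refine mem_doublyStochastic_iff_sum.mpr ⟨fun i j => mul_self_nonneg _, fun i => ?_, fun j => ?_⟩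
  · simpa [Matrix.mul_apply] using congrFun (congrFun hX' i) i
  · simpa [Matrix.mul_apply] using congrFun (congrFun hX j) j

lemma trace_diagonal_mul_mul_diagonal_mul_le {s t : n → R} (hst : Monovary s t)
    (hs : 0 ≤ s) (ht : 0 ≤ t) {X Y : Matrix n n R} (hX : Xᵀ * X = 1) (hY : Yᵀ * Y = 1) :
    trace (diagonal s * X * diagonal t * Y) ≤ ∑ i, s i * t i := by
  have hYt : Yᵀᵀ * Yᵀ = 1 := by rw [transpose_transpose, mul_eq_one_comm.mp hY]
  have hX2 := sum_mul_mul_le_of_mem_doublyStochastic hst (hadamard_self_mem_doublyStochastic hX)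
  have hY2 := sum_mul_mul_le_of_mem_doublyStochastic hst (hadamard_self_mem_doublyStochastic hYt)
  simp only [hadamard_apply, transpose_apply] at hX2 hY2
  have hamgm (i j : n) : s i * X i j * t j * Y j i ≤
      (s i * t j * (X i j * X i j) + s i * t j * (Y j i * Y j i)) / 2 := by
    have := mul_nonneg (hs i) (ht j)
    nlinarith [mul_nonneg this (mul_self_nonneg (X i j - Y j i))]
  calc trace (diagonal s * X * diagonal t * Y)
      = ∑ i, ∑ j, s i * X i j * t j * Y j i := by
        simp only [trace, diag_apply, mul_apply (M := diagonal s * X * diagonal t), mul_diagonal,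
          diagonal_mul]
    _ ≤ ∑ i, ∑ j, (s i * t j * (X i j * X i j) + s i * t j * (Y j i * Y j i)) / 2 := by
        gcongr with i _ j _; exact hamgm i j
    _ ≤ ∑ i, s i * t i := by
        simp only [← Finset.sum_div, Finset.sum_add_distrib]
        linarith

lemma trace_transpose_mul_le {s t : n → R} (hst : Monovary s t) (hs : 0 ≤ s) (ht : 0 ≤ t)
    {P Q U V : Matrix n n R} (hP : Pᵀ * P = 1) (hQ : Qᵀ * Q = 1) (hU : Uᵀ * U = 1)
    (hV : Vᵀ * V = 1) :
    trace ((P * diagonal s * Qᵀ)ᵀ * (U * diagonal t * Vᵀ)) ≤ ∑ i, s i * t i := by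
  have horth {A B : Matrix n n R} (hA : Aᵀ * A = 1) (hB : Bᵀ * B = 1) :
      (Aᵀ * B)ᵀ * (Aᵀ * B) = 1 := by
    rw [transpose_mul, transpose_transpose, Matrix.mul_assoc, ← Matrix.mul_assoc A,
      mul_eq_one_comm.mp hA, Matrix.one_mul, hB]
  have htrace : trace ((P * diagonal s * Qᵀ)ᵀ * (U * diagonal t * Vᵀ)) =
      trace (diagonal s * (Pᵀ * U) * diagonal t * (Vᵀ * Q)) := by
    simp only [transpose_mul, transpose_transpose, diagonal_transpose, Matrix.mul_assoc]
    rw [trace_mul_comm]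
    simp only [Matrix.mul_assoc]
  rw [htrace]
  exact trace_diagonal_mul_mul_diagonal_mul_le hst hs ht (horth hP hU) (horth hV hQ)

end OrderedField

lemma Tuple.comp_sort_eq_of_map_univ_eq {α : Type*} [LinearOrder α] {m : ℕ} {f g : Fin m → α}
    (hg : Monotone g) (h : Finset.univ.val.map f = Finset.univ.val.map g) :
    f ∘ Tuple.sort f = g := by
  have hperm : Finset.univ.val.map (f ∘ Tuple.sort f) = Finset.univ.val.map g := by
    rw [← Multiset.map_map, Multiset.map_univ_val_equiv, h]
  rw [Fin.univ_val_map, Fin.univ_val_map, Multiset.coe_eq_coe] at hperm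
  exact List.ofFn_injective <|
    hperm.eq_of_sortedLE (Tuple.monotone_sort f).sortedLE_ofFn hg.sortedLE_ofFn

section Real
variable {n : Type*} [Fintype n] [DecidableEq n]

lemma Matrix.IsHermitian.map_eigenvalues_eq_of_eq_mul_diagonal_mul_transpose
    {A Q : Matrix n n ℝ} {d : n → ℝ} (hA : A.IsHermitian) (hQ : Qᵀ * Q = 1)
    (h : A = Q * diagonal d * Qᵀ) : Finset.univ.val.map hA.eigenvalues = Finset.univ.val.map d := by
  have hchar : A.charpoly = (diagonal d).charpoly := by
    rw [h, charpoly_mul_comm, ← Matrix.mul_assoc, hQ, Matrix.one_mul]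
  have := congrArg Polynomial.roots hchar
  rw [hA.roots_charpoly_eq_eigenvalues, charpoly_diagonal, Polynomial.roots_prod _ _ (by
    simp [Finset.prod_ne_zero_iff, Polynomial.X_sub_C_ne_zero])] at this
  simpa using this

lemma exists_orthogonal_eq_mul_diagonal {M : Matrix n n ℝ} {s : n → ℝ}
    (hM : Mᵀ * M = diagonal fun i => s i * s i) :
    ∃ P : Matrix n n ℝ, Pᵀ * P = 1 ∧ M = P * diagonal s := by
  have hcol (i j : n) : Mᵀ j ⬝ᵥ Mᵀ i = if i = j then s i * s i else 0 := by
    simpa [mul_apply, dotProduct, diagonal_apply, mul_comm] using congrFun (congrFun hM i) j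
  have hzero (i : n) (hi : s i = 0) : Mᵀ i = 0 :=
    dotProduct_self_eq_zero.mp (by simpa [hi] using hcol i i)
  let v (i : n) : EuclideanSpace ℝ n := (s i)⁻¹ • WithLp.toLp 2 (Mᵀ i)
  have hv : Orthonormal ℝ ({i | s i ≠ 0}.domRestrict v) := by
    rw [orthonormal_iff_ite]
    rintro ⟨i, hi : s i ≠ 0⟩ ⟨j, hj⟩
    simp only [Set.domRestrict_apply, v, inner_smul_left, inner_smul_right,
      EuclideanSpace.inner_toLp_toLp, star_trivial, conj_trivial, hcol, Subtype.mk.injEq]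
    split_ifs with hij
    · subst hij
      field_simp
    · simp
  obtain ⟨b, hb⟩ := hv.exists_orthonormalBasis_extension_of_card_eq (by simp)
  refine ⟨(EuclideanSpace.basisFun n ℝ).toBasis.toMatrix b.toBasis, ?_, ?_⟩
  · simpa using (EuclideanSpace.basisFun n ℝ).toMatrix_orthonormalBasis_conjTranspose_mul_self b
  · ext a i
    rw [mul_diagonal, Module.Basis.toMatrix_apply]
    by_cases hi : s i = 0
    · simpa [hi] using congrFun (hzero i hi) a
    · simp only [OrthonormalBasis.coe_toBasis, hb i hi, map_smul, Finsupp.coe_smul, Pi.smul_apply,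
        OrthonormalBasis.coe_toBasis_repr_apply, EuclideanSpace.basisFun_repr, transpose_apply,
        smul_eq_mul, v]
      field_simp

lemma Matrix.IsHermitian.exists_orthogonal_eq_mul_diagonal_comp_mul_transpose {A : Matrix n n ℝ}
    (hA : A.IsHermitian) (e : Equiv.Perm n) :
    ∃ Q : Matrix n n ℝ, Qᵀ * Q = 1 ∧ A = Q * diagonal (hA.eigenvalues ∘ e) * Qᵀ := by
  set W : Matrix n n ℝ := (hA.eigenvectorUnitary : Matrix n n ℝ)
  have hW : Wᵀ * W = 1 := by
    simpa [star_eq_conjTranspose] using mem_unitaryGroup_iff'.mp hA.eigenvectorUnitary.2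
  have hspec : A = W * diagonal hA.eigenvalues * Wᵀ := by
    simpa [star_eq_conjTranspose] using hA.spectral_theorem
  refine ⟨W.submatrix id e, ?_, ?_⟩
  · rw [transpose_submatrix, ← submatrix_mul _ _ _ _ _ Function.bijective_id, hW,
      submatrix_one_equiv]
  · rw [← submatrix_diagonal_equiv, transpose_submatrix, submatrix_mul_equiv,
      submatrix_mul_equiv, ← hspec, submatrix_id_id]

end Real

lemma singularValuesDesc_nonneg {m : ℕ} (A : Matrix (Fin m) (Fin m) ℝ) :
    0 ≤ singularValuesDesc A :=
  fun _ => Real.sqrt_nonneg _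

lemma singularValuesDesc_antitone {m : ℕ} (A : Matrix (Fin m) (Fin m) ℝ) :
    Antitone (singularValuesDesc A) :=
  fun _ _ hij => Real.sqrt_le_sqrt <|
    Tuple.monotone_sort (isHermitian_conjTranspose_mul_self A).eigenvalues (Fin.rev_le_rev.mpr hij)

lemma singularValuesDesc_mul_diagonal_mul_transpose {m : ℕ} {P Q : Matrix (Fin m) (Fin m) ℝ}
    {d : Fin m → ℝ} (hP : Pᵀ * P = 1) (hQ : Qᵀ * Q = 1) (hd : Antitone d) (hd0 : 0 ≤ d) :
    singularValuesDesc (P * diagonal d * Qᵀ) = d := by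
  set A := P * diagonal d * Qᵀ
  have hH := isHermitian_conjTranspose_mul_self A
  have hAA : Aᴴ * A = Q * diagonal (fun i => d i * d i) * Qᵀ := by
    simp only [A, conjTranspose_eq_transpose_of_trivial, transpose_mul, transpose_transpose,
      diagonal_transpose, Matrix.mul_assoc]
    rw [← Matrix.mul_assoc Pᵀ, hP, Matrix.one_mul, ← Matrix.mul_assoc (diagonal d),
      diagonal_mul_diagonal]
  have hsorted : hH.eigenvalues ∘ Tuple.sort hH.eigenvalues = fun i => d i.rev * d i.rev := by
    refine Tuple.comp_sort_eq_of_map_univ_eq (fun i j hij => ?_) ?_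
    · exact mul_self_le_mul_self (hd0 _) (hd (Fin.rev_le_rev.mpr hij))
    · rw [hH.map_eigenvalues_eq_of_eq_mul_diagonal_mul_transpose hQ hAA,
        show (fun i => d i.rev * d i.rev) = (fun i => d i * d i) ∘ Fin.revPerm from rfl,
        ← Multiset.map_map, Multiset.map_univ_val_equiv]
  funext i
  have := congrArg Real.sqrt (congrFun hsorted i.rev)
  rwa [Fin.rev_rev, Real.sqrt_mul_self (hd0 i)] at this

lemma exists_svd {m : ℕ} (J : Matrix (Fin m) (Fin m) ℝ) :
    ∃ P Q : Matrix (Fin m) (Fin m) ℝ, Pᵀ * P = 1 ∧ Qᵀ * Q = 1 ∧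
      J = P * diagonal (singularValuesDesc J) * Qᵀ := by
  have hH := isHermitian_conjTranspose_mul_self J
  obtain ⟨Q, hQ, hJJ⟩ := hH.exists_orthogonal_eq_mul_diagonal_comp_mul_transpose
    (Fin.revPerm.trans (Tuple.sort hH.eigenvalues))
  have hsq : hH.eigenvalues ∘ Fin.revPerm.trans (Tuple.sort hH.eigenvalues) =
      fun i => singularValuesDesc J i * singularValuesDesc J i := funext fun i =>
    (Real.mul_self_sqrt ((posSemidef_conjTranspose_mul_self J).eigenvalues_nonneg _)).symm
  rw [hsq, conjTranspose_eq_transpose_of_trivial] at hJJ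
  have hJQ : (J * Q)ᵀ * (J * Q) =
      diagonal fun i => singularValuesDesc J i * singularValuesDesc J i := by
    rw [transpose_mul, Matrix.mul_assoc, ← Matrix.mul_assoc Jᵀ, hJJ]
    simp only [Matrix.mul_assoc, hQ, Matrix.mul_one]
    rw [← Matrix.mul_assoc, hQ, Matrix.one_mul]
  obtain ⟨P, hP, hJQ⟩ := exists_orthogonal_eq_mul_diagonal hJQ
  refine ⟨P, Q, hP, hQ, ?_⟩
  rw [← hJQ, Matrix.mul_assoc, mul_eq_one_comm.mp hQ, Matrix.mul_one]

section CommRing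
variable {R n : Type*} [CommRing R] [Fintype n]

lemma trace_sub_mul_transpose_sub (J B : Matrix n n R) :
    trace ((J - B) * (J - B)ᵀ) = trace (J * Jᵀ) - 2 * trace (Jᵀ * B) + trace (B * Bᵀ) := by
  have hJB : trace (J * Bᵀ) = trace (Jᵀ * B) := by
    rw [← trace_transpose, transpose_mul, transpose_transpose, trace_mul_comm]
  rw [transpose_sub, Matrix.sub_mul, Matrix.mul_sub, Matrix.mul_sub, trace_sub, trace_sub,
    trace_sub, hJB, trace_mul_comm B]
  ring

variable [DecidableEq n]

lemma trace_mul_diagonal_mul_transpose_mul_transpose {P Q : Matrix n n R} (hP : Pᵀ * P = 1)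
    (hQ : Qᵀ * Q = 1) (d : n → R) :
    trace (P * diagonal d * Qᵀ * (P * diagonal d * Qᵀ)ᵀ) = ∑ i, d i ^ 2 := by
  have hsq : P * diagonal d * Qᵀ * (P * diagonal d * Qᵀ)ᵀ =
      P * (diagonal (fun i => d i ^ 2) * Pᵀ) := by
    simp only [transpose_mul, transpose_transpose, diagonal_transpose, Matrix.mul_assoc]
    rw [← Matrix.mul_assoc Qᵀ, hQ, Matrix.one_mul, ← Matrix.mul_assoc (diagonal d),
      diagonal_mul_diagonal]
    simp only [sq]
  rw [hsq, trace_mul_comm, Matrix.mul_assoc, hP, Matrix.mul_one, trace_diagonal]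

end CommRing

lemma sum_sq_sub_singularValuesDesc_le {m : ℕ} (J : Matrix (Fin m) (Fin m) ℝ)
    {U V : Matrix (Fin m) (Fin m) ℝ} {σ : Fin m → ℝ} (hU : Uᵀ * U = 1) (hV : Vᵀ * V = 1)
    (hσ : Antitone σ) (hσ0 : 0 ≤ σ) :
    ∑ i, (singularValuesDesc J i - σ i) ^ 2 ≤
      trace ((J - U * diagonal σ * Vᵀ) * (J - U * diagonal σ * Vᵀ)ᵀ) := by
  obtain ⟨P, Q, hP, hQ, hJ⟩ := exists_svd J
  set x := singularValuesDesc J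
  have hvonNeumann : trace (Jᵀ * (U * diagonal σ * Vᵀ)) ≤ ∑ i, x i * σ i := by
    rw [hJ]
    exact trace_transpose_mul_le ((singularValuesDesc_antitone J).monovary hσ)
      (singularValuesDesc_nonneg J) hσ0 hP hQ hU hV
  have hexpand : ∑ i, (x i - σ i) ^ 2 = ∑ i, x i ^ 2 - 2 * ∑ i, x i * σ i + ∑ i, σ i ^ 2 := by
    simp only [sub_sq, Finset.sum_add_distrib, Finset.sum_sub_distrib, Finset.mul_sum]
    ring_nf
  rw [trace_sub_mul_transpose_sub, hexpand, trace_mul_diagonal_mul_transpose_mul_transpose hU hV,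
    hJ, trace_mul_diagonal_mul_transpose_mul_transpose hP hQ, ← hJ]
  linarith

lemma softThreshold_zero (τ : ℝ) : softThreshold τ 0 = 0 := by simp [softThreshold]

lemma softThreshold_of_nonneg {τ x : ℝ} (hτ : 0 ≤ τ) (hx : 0 ≤ x) :
    softThreshold τ x = max (x - τ) 0 := by
  rcases hx.eq_or_lt with rfl | hx
  · simp [softThreshold, hτ]
  · rw [softThreshold, Real.sign_of_pos hx, abs_of_pos hx, one_mul]

lemma softThreshold_nonneg {τ x : ℝ} (hτ : 0 ≤ τ) (hx : 0 ≤ x) : 0 ≤ softThreshold τ x := by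
  rw [softThreshold_of_nonneg hτ hx]
  exact le_max_right _ _

lemma softThreshold_neg (τ x : ℝ) : softThreshold τ (-x) = -softThreshold τ x := by
  simp [softThreshold, Real.sign_neg]

lemma abs_softThreshold_add_sq_le {μ : ℝ} (hμ : 0 < μ) (σ x : ℝ) :
    |softThreshold μ⁻¹ σ| + μ / 2 * (softThreshold μ⁻¹ σ - σ) ^ 2 ≤ |x| + μ / 2 * (x - σ) ^ 2 := by
  wlog hσ : 0 ≤ σ generalizing σ x
  · have := this (-σ) (-x) (by linarith)
    rwa [softThreshold_neg, abs_neg, abs_neg, ← neg_sub', neg_sq, ← neg_sub', neg_sq] at this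
  have hμσ : 0 ≤ μ * σ := mul_nonneg hμ.le hσ
  rw [softThreshold_of_nonneg (inv_nonneg.mpr hμ.le) hσ]
  rcases le_total μ⁻¹ σ with h | h
  · rw [max_eq_left (by linarith), abs_of_nonneg (by linarith)]
    have hsq : μ / 2 * (x - σ + μ⁻¹) ^ 2 = μ / 2 * (x - σ) ^ 2 + (x - σ) + μ⁻¹ / 2 := by
      field_simp; ring
    have hgap : μ / 2 * (σ - μ⁻¹ - σ) ^ 2 = μ⁻¹ / 2 := by
      field_simp; ring
    nlinarith [le_abs_self x, sq_nonneg (x - σ + μ⁻¹)]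
  · rw [max_eq_right (by linarith), abs_zero]
    have hμσ1 : μ * σ ≤ 1 := by
      simpa [mul_inv_cancel₀ hμ.ne'] using mul_le_mul_of_nonneg_left h hμ.le
    nlinarith [mul_le_mul_of_nonneg_right (le_abs_self x) hμσ,
      mul_le_of_le_one_right (abs_nonneg x) hμσ1, mul_nonneg hμ.le (sq_nonneg x)]

noncomputable def partialSoftThreshold {m : ℕ} (r : ℕ) (τ : ℝ) (σ : Fin m → ℝ) (i : Fin m) : ℝ :=
  if (i : ℕ) < r then σ i else softThreshold τ (σ i)

lemma diagonal_add_map_softThreshold {m : ℕ} (r : ℕ) (τ : ℝ) (σ : Fin m → ℝ) :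
    (diagonal fun i : Fin m => if (i : ℕ) < r then σ i else 0) +
        (diagonal fun i : Fin m => if r ≤ (i : ℕ) then σ i else 0).map (softThreshold τ) =
      diagonal (partialSoftThreshold r τ σ) := by
  rw [diagonal_map (softThreshold_zero τ), diagonal_add]
  congr 1
  funext i
  by_cases hi : (i : ℕ) < r
  · simp [partialSoftThreshold, hi, not_le.mpr hi, softThreshold_zero]
  · simp [partialSoftThreshold, hi, le_of_not_gt hi]

lemma partialSoftThreshold_nonneg {m : ℕ} (r : ℕ) {τ : ℝ} {σ : Fin m → ℝ} (hτ : 0 ≤ τ)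
    (hσ0 : 0 ≤ σ) : 0 ≤ partialSoftThreshold r τ σ := by
  intro i
  unfold partialSoftThreshold
  split_ifs
  · exact hσ0 i
  · exact softThreshold_nonneg hτ (hσ0 i)

lemma antitone_partialSoftThreshold {m : ℕ} (r : ℕ) {τ : ℝ} {σ : Fin m → ℝ} (hτ : 0 ≤ τ)
    (hσ : Antitone σ) (hσ0 : 0 ≤ σ) : Antitone (partialSoftThreshold r τ σ) := by
  intro i j hij
  have hσij := hσ hij
  have hij' : (i : ℕ) ≤ j := hij
  unfold partialSoftThreshold
  rw [softThreshold_of_nonneg hτ (hσ0 i), softThreshold_of_nonneg hτ (hσ0 j)]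
  split_ifs with hj hi hi
  · exact hσij
  · omega
  · exact max_le (by linarith) (hσ0 i)
  · exact max_le_max (by linarith) le_rfl

lemma isMinOn_partialSoftThreshold {m : ℕ} (r : ℕ) {μ : ℝ} (hμ : 0 < μ) {σ : Fin m → ℝ} {i : Fin m}
    (hσ0 : 0 ≤ σ i) :
    IsMinOn (fun y => (if r ≤ (i : ℕ) then y else 0) + μ / 2 * (y - σ i) ^ 2) (Set.Ici 0)
      (partialSoftThreshold r μ⁻¹ σ i) := by
  refine isMinOn_iff.mpr fun y (hy : 0 ≤ y) => ?_
  by_cases hi : r ≤ (i : ℕ)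
  · have hS : 0 ≤ softThreshold μ⁻¹ (σ i) := softThreshold_nonneg (inv_nonneg.mpr hμ.le) hσ0
    simpa [partialSoftThreshold, hi, not_lt.mpr hi, abs_of_nonneg hS, abs_of_nonneg hy] using
      abs_softThreshold_add_sq_le hμ (σ i) y
  · have hσi : partialSoftThreshold r μ⁻¹ σ i = σ i := if_pos (lt_of_not_ge hi)
    simp only [hσi, hi, if_false, sub_self]
    nlinarith [mul_nonneg hμ.le (sq_nonneg (y - σ i))]

theorem pssv_proximal_operator_general {m : ℕ}
    (B U V : Matrix (Fin m) (Fin m) ℝ) (σ : Fin m → ℝ)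
    (hU : Uᵀ * U = 1) (hV : Vᵀ * V = 1)
    (hσdesc : Antitone σ) (hσnonneg : ∀ i, 0 ≤ σ i)
    (hB : B = U * Matrix.diagonal σ * Vᵀ)
    (r : ℕ) (μ : ℝ) (hμ : 0 < μ) :
    let Dr : Matrix (Fin m) (Fin m) ℝ :=
      Matrix.diagonal fun i => if (i : ℕ) < r then σ i else 0
    let Dr' : Matrix (Fin m) (Fin m) ℝ :=
      Matrix.diagonal fun i => if r ≤ (i : ℕ) then σ i else 0
    let Jstar : Matrix (Fin m) (Fin m) ℝ :=
      U * (Dr + Dr'.map (softThreshold μ⁻¹)) * Vᵀ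
    ∀ J : Matrix (Fin m) (Fin m) ℝ,
      pssvNorm r Jstar + μ / 2 * Matrix.trace ((Jstar - B) * (Jstar - B)ᵀ) ≤
        pssvNorm r J + μ / 2 * Matrix.trace ((J - B) * (J - B)ᵀ) := by
  intro Dr Dr' Jstar J
  have hτ : 0 ≤ μ⁻¹ := inv_nonneg.mpr hμ.le
  set g := partialSoftThreshold r μ⁻¹ σ
  set x := singularValuesDesc J
  have hJstar : Jstar = U * diagonal g * Vᵀ := by
    rw [← diagonal_add_map_softThreshold]
  have hsv : singularValuesDesc Jstar = g := by
    rw [hJstar]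
    exact singularValuesDesc_mul_diagonal_mul_transpose hU hV
      (antitone_partialSoftThreshold r hτ hσdesc hσnonneg)
      (partialSoftThreshold_nonneg r hτ hσnonneg)
  have hdist : trace ((Jstar - B) * (Jstar - B)ᵀ) = ∑ i, (g i - σ i) ^ 2 := by
    rw [hJstar, hB, ← Matrix.sub_mul, ← Matrix.mul_sub, diagonal_sub]
    exact trace_mul_diagonal_mul_transpose_mul_transpose hU hV _
  calc pssvNorm r Jstar + μ / 2 * trace ((Jstar - B) * (Jstar - B)ᵀ)
      = ∑ i : Fin m, ((if r ≤ (i : ℕ) then g i else 0) + μ / 2 * (g i - σ i) ^ 2) := by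
        rw [pssvNorm, hsv, hdist, Finset.mul_sum, Finset.sum_add_distrib]
    _ ≤ ∑ i : Fin m, ((if r ≤ (i : ℕ) then x i else 0) + μ / 2 * (x i - σ i) ^ 2) :=
        Finset.sum_le_sum fun i _ =>
          isMinOn_partialSoftThreshold r hμ (hσnonneg i) (singularValuesDesc_nonneg J i)
    _ = pssvNorm r J + μ / 2 * ∑ i, (x i - σ i) ^ 2 := by
        rw [pssvNorm, Finset.mul_sum, Finset.sum_add_distrib]
    _ ≤ pssvNorm r J + μ / 2 * trace ((J - B) * (J - B)ᵀ) := by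
        rw [hB]
        gcongr
        exact sum_sq_sub_singularValuesDesc_le J hU hV hσdesc hσnonneg

/-- (Theorem 1, PSSV proximal operator.) If `B = U D Vᵀ` is a singular value decomposition
of `B` with singular values `σ₁ ≥ … ≥ σ_m ≥ 0`, `0 ≤ r ≤ m` and `μ > 0`, then
`J* = U (D_r + 𝒮_{1/μ}[D_{r'}]) Vᵀ` is a global minimizer of
`min_J ‖J‖_{>r} + (μ/2)‖J − B‖_F²`, where `D_r` keeps the `r` largest singular values,
`D_{r'}` the remaining ones, and `‖M‖_F² = tr(MMᵀ)`. -/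
theorem pssv_proximal_operator {m : ℕ}
    (B U V : Matrix (Fin m) (Fin m) ℝ) (σ : Fin m → ℝ)
    (hU : Uᵀ * U = 1) (hV : Vᵀ * V = 1)
    (hσdesc : Antitone σ) (hσnonneg : ∀ i, 0 ≤ σ i)
    (hB : B = U * Matrix.diagonal σ * Vᵀ)
    (hσsv : ∀ i, σ i = singularValuesDesc B i)
    (r : ℕ) (hr : r ≤ m) (μ : ℝ) (hμ : 0 < μ) :
    let Dr : Matrix (Fin m) (Fin m) ℝ :=
      Matrix.diagonal fun i => if (i : ℕ) < r then σ i else 0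
    let Dr' : Matrix (Fin m) (Fin m) ℝ :=
      Matrix.diagonal fun i => if r ≤ (i : ℕ) then σ i else 0
    let Jstar : Matrix (Fin m) (Fin m) ℝ :=
      U * (Dr + Dr'.map (softThreshold μ⁻¹)) * Vᵀ
    ∀ J : Matrix (Fin m) (Fin m) ℝ,
      pssvNorm r Jstar + μ / 2 * Matrix.trace ((Jstar - B) * (Jstar - B)ᵀ) ≤
        pssvNorm r J + μ / 2 * Matrix.trace ((J - B) * (J - B)ᵀ) :=
  pssv_proximal_operator_general B U V σ hU hV hσdesc hσnonneg hB r μ hμ
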